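/- Let n ≥ 1 and let Θ ⊆ {0,1}ⁿ with |Θ| = f ≥ 1 and 𝟎 ∈ Θ, where 𝟎 is the all-zero string. Let X be the random input with Pr(X = 𝟎) = 1/2 and Pr(X = x) = 1/(2(2ⁿ − 1)) for every x ≠ 𝟎, and let Y be the output of V_Θ on input X. Then I(X;Y) ≥ (1/2)·log₂( 2 / (1 + (2ⁿ − f)/(2ⁿ(2ⁿ − 1))) ). (In particular, this lower bound tends to 1/2 as n → ∞, so the identity code on this channel family is not semantically secure.) -/

import Mathlib

open scoped BigOperators

noncomputable section

/-- A probability distribution on a finite type. -/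
def IsProbDist {α : Type} [Fintype α] (p : α → ℝ) : Prop :=
  (∀ a, 0 ≤ p a) ∧ (∑ a, p a) = 1

/-- Output distribution of channel `V` under random encoder `Φ` on message `u`. -/
def Zout {U X Z : Type} [Fintype X] (Φ : U → X → ℝ) (V : X → Z → ℝ) (u : U) (z : Z) : ℝ :=
  ∑ x, Φ u x * V x z

/-- Probability that the decoder `ψ` fails on message `u`. -/
def errProb {U X Y : Type} [Fintype X] [Fintype Y] [DecidableEq U]
    (W : X → Y → ℝ) (Φ : U → X → ℝ) (ψ : Y → U) (u : U) : ℝ :=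
  ∑ y, (if ψ y ≠ u then Zout Φ W u y else 0)

/-- Shannon mutual information in bits (logarithm base 2) of the joint law `p u * q u z`. -/
def mutualInfo2 {U Z : Type} [Fintype U] [Fintype Z] (p : U → ℝ) (q : U → Z → ℝ) : ℝ :=
  ∑ u, ∑ z, p u * q u z * Real.logb 2 (q u z / (∑ v, p v * q v z))

/-- The channel `V_Θ` on `{0,1}ⁿ`: the identity channel on inputs in `Θ` and the completely
noisy (uniform-output) channel on inputs outside `Θ`. -/
def Vtheta (n : ℕ) (Θ : Finset (Fin n → Bool)) (x y : Fin n → Bool) : ℝ :=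
  if x ∈ Θ then (if y = x then 1 else 0) else ((2:ℝ) ^ n)⁻¹

/-!
Mutual information is the `p`-average of the relative entropies `D(V(·|x) ‖ P_Y)`, each of which
is nonnegative by Gibbs' inequality. Keeping only the term of the input `𝟎 ∈ Θ`, whose row is the
point mass at `𝟎`, gives `I(X;Y) ≥ ½ · log₂ (1 / P_Y(𝟎))`, and
`P_Y(𝟎) = ½ + (2ⁿ − f) · 1/(2(2ⁿ−1)) · 2⁻ⁿ` collects the mass sent to `𝟎` by the inputs outside `Θ`.
-/

open Finset Real

lemma sub_le_mul_log_div {v q : ℝ} (hv : 0 ≤ v) (hq : 0 < q) : v - q ≤ v * log (v / q) := by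
  have h := mul_nonneg hq.le (InformationTheory.klFun_nonneg (div_nonneg hv hq.le))
  have hkl : q * InformationTheory.klFun (v / q) = v * log (v / q) + q - v := by
    rw [InformationTheory.klFun_apply]
    field_simp
  linarith

lemma sum_mul_logb_div_nonneg {ι : Type*} (s : Finset ι) {b : ℝ} (hb : 1 < b) {v q : ι → ℝ}
    (hv : ∀ i ∈ s, 0 ≤ v i) (hq : ∀ i ∈ s, 0 < q i) (hsum : ∑ i ∈ s, q i ≤ ∑ i ∈ s, v i) :
    0 ≤ ∑ i ∈ s, v i * logb b (v i / q i) := by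
  have hlogb : 0 < log b := log_pos hb
  calc (0 : ℝ) ≤ (∑ i ∈ s, v i - ∑ i ∈ s, q i) / log b := div_nonneg (by linarith) hlogb.le
    _ = ∑ i ∈ s, (v i - q i) / log b := by rw [← sum_sub_distrib, sum_div]
    _ ≤ ∑ i ∈ s, v i * logb b (v i / q i) := by
      refine sum_le_sum fun i hi => ?_
      rw [logb, ← mul_div_assoc]
      exact div_le_div_of_nonneg_right (sub_le_mul_log_div (hv i hi) (hq i hi)) hlogb.le

section MutualInfo

variable {U Z : Type} [Fintype U] [Fintype Z] {p : U → ℝ} {q : U → Z → ℝ}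

lemma sum_output_eq (hq : ∀ u, IsProbDist (q u)) : ∑ z, ∑ v, p v * q v z = ∑ v, p v := by
  rw [sum_comm]
  exact sum_congr rfl fun v _ => by rw [← mul_sum, (hq v).2, mul_one]

lemma mutualInfo2_eq_sum_mul :
    mutualInfo2 p q = ∑ u, p u * ∑ z, q u z * logb 2 (q u z / ∑ v, p v * q v z) := by
  simp only [mutualInfo2, mul_sum, mul_assoc]

lemma mul_sum_mul_logb_le_mutualInfo2 (hp : IsProbDist p) (hq : ∀ u, IsProbDist (q u))
    (hout : ∀ z, 0 < ∑ v, p v * q v z) (u : U) :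
    p u * ∑ z, q u z * logb 2 (q u z / ∑ v, p v * q v z) ≤ mutualInfo2 p q := by
  have hrelEntropy (w : U) : 0 ≤ ∑ z, q w z * logb 2 (q w z / ∑ v, p v * q v z) :=
    sum_mul_logb_div_nonneg univ one_lt_two (fun z _ => (hq w).1 z) (fun z _ => hout z)
      (by rw [sum_output_eq hq, hp.2, (hq w).2])
  rw [mutualInfo2_eq_sum_mul]
  exact single_le_sum (fun w _ => mul_nonneg (hp.1 w) (hrelEntropy w)) (mem_univ u)

lemma mul_logb_inv_output_le_mutualInfo2 [DecidableEq Z] (hp : IsProbDist p)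
    (hq : ∀ u, IsProbDist (q u)) (hout : ∀ z, 0 < ∑ v, p v * q v z) {u : U} {z₀ : Z}
    (hu : ∀ z, q u z = if z = z₀ then 1 else 0) :
    p u * logb 2 (∑ v, p v * q v z₀)⁻¹ ≤ mutualInfo2 p q := by
  convert mul_sum_mul_logb_le_mutualInfo2 hp hq hout u using 2
  simp [hu]

end MutualInfo

def zeroBiasedInput (n : ℕ) : (Fin n → Bool) → ℝ :=
  fun x => if x = (fun _ => false) then (1:ℝ)/2 else 1 / (2 * ((2:ℝ) ^ n - 1))

lemma zeroBiasedInput_zero (n : ℕ) : zeroBiasedInput n (fun _ => false) = 1 / 2 := if_pos rfl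

lemma zeroBiasedInput_of_ne {n : ℕ} {x : Fin n → Bool} (hx : x ≠ fun _ => false) :
    zeroBiasedInput n x = 1 / (2 * ((2:ℝ) ^ n - 1)) := if_neg hx

lemma card_binaryWords (n : ℕ) : (Fintype.card (Fin n → Bool) : ℝ) = 2 ^ n := by
  simp

lemma zeroBiasedInput_pos {n : ℕ} (hn : 1 ≤ n) (x : Fin n → Bool) : 0 < zeroBiasedInput n x := by
  have : (1:ℝ) < 2 ^ n := one_lt_pow₀ one_lt_two (by omega)
  unfold zeroBiasedInput
  split_ifs
  · norm_num
  · exact div_pos one_pos (by linarith)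

lemma isProbDist_zeroBiasedInput {n : ℕ} (hn : 1 ≤ n) : IsProbDist (zeroBiasedInput n) := by
  have hN : (2:ℝ) ^ n - 1 ≠ 0 := (sub_pos.mpr (one_lt_pow₀ one_lt_two (by omega))).ne'
  refine ⟨fun x => (zeroBiasedInput_pos hn x).le, ?_⟩
  calc ∑ x, zeroBiasedInput n x
      = 1 / 2 + (#(univ.erase fun _ : Fin n => false) : ℝ) * (1 / (2 * ((2:ℝ) ^ n - 1))) := by
        rw [← add_sum_erase _ _ (mem_univ fun _ : Fin n => false),
          sum_congr rfl fun x hx => zeroBiasedInput_of_ne (ne_of_mem_erase hx),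
          sum_const, nsmul_eq_mul, zeroBiasedInput_zero]
    _ = 1 := by
      rw [cast_card_erase_of_mem (mem_univ _), card_univ, card_binaryWords]
      field_simp
      ring

lemma isProbDist_Vtheta (n : ℕ) (Θ : Finset (Fin n → Bool)) (x : Fin n → Bool) :
    IsProbDist (Vtheta n Θ x) := by
  unfold Vtheta
  refine ⟨fun y => by split_ifs <;> positivity, ?_⟩
  split_ifs <;> simp

lemma output_Vtheta_pos {n : ℕ} (hn : 1 ≤ n) (Θ : Finset (Fin n → Bool)) (y : Fin n → Bool) :
    0 < ∑ x, zeroBiasedInput n x * Vtheta n Θ x y := by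
  have hdiag : 0 < zeroBiasedInput n y * Vtheta n Θ y y :=
    mul_pos (zeroBiasedInput_pos hn y) (by unfold Vtheta; split_ifs <;> simp_all)
  exact hdiag.trans_le <| single_le_sum (fun x _ => mul_nonneg (zeroBiasedInput_pos hn x).le
    ((isProbDist_Vtheta n Θ x).1 y)) (mem_univ y)

lemma output_Vtheta_zero {n : ℕ} (hn : 1 ≤ n) {Θ : Finset (Fin n → Bool)}
    (h0 : (fun _ => false) ∈ Θ) :
    ∑ x, zeroBiasedInput n x * Vtheta n Θ x (fun _ => false)
      = (1 + ((2:ℝ) ^ n - #Θ) / ((2:ℝ) ^ n * ((2:ℝ) ^ n - 1))) / 2 := by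
  have hN : (2:ℝ) ^ n - 1 ≠ 0 := (sub_pos.mpr (one_lt_pow₀ one_lt_two (by omega))).ne'
  have hinside : ∑ x ∈ Θ, zeroBiasedInput n x * Vtheta n Θ x (fun _ => false) = 1 / 2 := by
    rw [sum_congr rfl fun x hx => by rw [Vtheta, if_pos hx, mul_ite, mul_one, mul_zero],
      sum_ite_eq_of_mem Θ _ _ h0, zeroBiasedInput_zero]
  have houtside : ∑ x ∈ Θᶜ, zeroBiasedInput n x * Vtheta n Θ x (fun _ => false)
      = ((2:ℝ) ^ n - #Θ) * (1 / (2 * ((2:ℝ) ^ n - 1)) * ((2:ℝ) ^ n)⁻¹) := by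
    rw [sum_congr rfl fun x hx => ?_, sum_const, nsmul_eq_mul, card_compl,
      Nat.cast_sub (card_le_univ Θ), card_binaryWords]
    have hx : x ∉ Θ := mem_compl.mp hx
    rw [Vtheta, if_neg hx, zeroBiasedInput_of_ne (ne_of_mem_of_not_mem h0 hx).symm]
  rw [← sum_add_sum_compl Θ, hinside, houtside]
  field_simp

theorem mutualInfo_Vtheta_not_semantic_general (n : ℕ) (hn : 1 ≤ n)
    (Θ : Finset (Fin n → Bool)) (f : ℕ) (hcard : Θ.card = f)
    (h0 : (fun _ => false) ∈ Θ) :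
    (1/2) * Real.logb 2
        (2 / (1 + ((2:ℝ) ^ n - f) / ((2:ℝ) ^ n * ((2:ℝ) ^ n - 1))))
      ≤ mutualInfo2
          (fun x : Fin n → Bool =>
            if x = (fun _ => false) then (1:ℝ)/2 else 1 / (2 * ((2:ℝ) ^ n - 1)))
          (Vtheta n Θ) := by
  have key := mul_logb_inv_output_le_mutualInfo2 (isProbDist_zeroBiasedInput hn)
    (isProbDist_Vtheta n Θ) (output_Vtheta_pos hn Θ) (u := fun _ => false)
    (fun y => by rw [Vtheta, if_pos h0])
  rw [output_Vtheta_zero hn h0, hcard, inv_div, zeroBiasedInput_zero] at key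
  exact key

/-- **Statement 15.** For `Θ ⊆ {0,1}ⁿ` with `|Θ| = f ≥ 1` and `𝟎 ∈ Θ`, and the input `X`
with `Pr(X = 𝟎) = 1/2` and `Pr(X = x) = 1/(2(2ⁿ−1))` for `x ≠ 𝟎`, the mutual information
of `X` and the output of `V_Θ` satisfies
`I(X;Y) ≥ (1/2)·log₂( 2 / (1 + (2ⁿ−f)/(2ⁿ(2ⁿ−1))) )`. -/
theorem mutualInfo_Vtheta_not_semantic (n : ℕ) (hn : 1 ≤ n)
    (Θ : Finset (Fin n → Bool)) (f : ℕ) (hcard : Θ.card = f) (hf : 1 ≤ f)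
    (h0 : (fun _ => false) ∈ Θ) :
    (1/2) * Real.logb 2
        (2 / (1 + ((2:ℝ) ^ n - f) / ((2:ℝ) ^ n * ((2:ℝ) ^ n - 1))))
      ≤ mutualInfo2
          (fun x : Fin n → Bool =>
            if x = (fun _ => false) then (1:ℝ)/2 else 1 / (2 * ((2:ℝ) ^ n - 1)))
          (Vtheta n Θ) :=
  mutualInfo_Vtheta_not_semantic_general n hn Θ f hcard h0

end
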